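/- arXiv:2103.07706 — 2 statements merged into one kernel-verified Lean document; each statement's English description precedes it below -/
import Mathlib

section
/- Let E be a complex Banach space, L : E →L[ℂ] E, N : E → E, and let a finite index set I with weights w : I → ℝ and phase shifts s : I → ℝ be given. Fix tⁿ ∈ ℝ and Δt ∈ ℝ, and set t^{n+1} = tⁿ + Δt. Suppose Vⁿ, V₁ ∈ E satisfy V₁ = Vⁿ + Δt • ∑_{k ∈ I} w k • exp(-(tⁿ + s k) • L)(N(exp((tⁿ + s k) • L)(Vⁿ))). Define Ūⁿ = exp(tⁿ • L)(Vⁿ) and Ū₁ = exp(t^{n+1} • L)(V₁). Then Ū₁ = exp(Δt • L)(Ūⁿ) + Δt • exp(Δt • L)(∑_{k ∈ I} w k • exp(-(s k) • L)(N(exp((s k) • L)(Ūⁿ)))). -/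
open NormedSpace

/-!
`t ↦ exp (t • L)` is a one-parameter group, so `exp (tⁿ⁺¹ • L) ∘ exp (-(tⁿ + s) • L)` is
`exp (Δt • L) ∘ exp (-s • L)` and `exp ((tⁿ + s) • L) = exp (s • L) ∘ exp (tⁿ • L)`; with these
the two forms of the stage agree term by term.
-/

section OneParameterGroup

variable {𝕜 𝔸 : Type*} [RCLike 𝕜] [NormedRing 𝔸] [NormedAlgebra 𝕜 𝔸] [CompleteSpace 𝔸]

theorem exp_add_smul (a : 𝔸) (s t : 𝕜) : exp ((s + t) • a) = exp (s • a) * exp (t • a) := by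
  let +nondep : NormedAlgebra ℚ 𝔸 := .restrictScalars ℚ 𝕜 𝔸
  rw [add_smul]
  exact exp_add_of_commute (((Commute.refl a).smul_left s).smul_right t)

theorem exp_smul_apply_exp_smul_apply {E : Type*} [NormedAddCommGroup E] [NormedSpace 𝕜 E]
    [CompleteSpace E] (L : E →L[𝕜] E) (s t : 𝕜) (x : E) :
    exp (s • L) (exp (t • L) x) = exp ((s + t) • L) x :=
  (congrArg (· x) (exp_add_smul L s t)).symm

end OneParameterGroup

/-- Equivalence of the first SSPRK stage in transformed variables `V̄` (eq. (18))
and in original variables `Ū` (eq. (20)). -/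
theorem ssprk_stage1_equiv
    {E : Type*} [NormedAddCommGroup E] [NormedSpace ℂ E] [CompleteSpace E]
    (L : E →L[ℂ] E) (N : E → E)
    {I : Type*} [Fintype I] (w : I → ℝ) (s : I → ℝ)
    (tn Δt : ℝ) (tn1 : ℝ) (htn1 : tn1 = tn + Δt)
    (Vn V1 : E)
    (hV1 : V1 = Vn + Δt • ∑ k : I, w k •
      exp ((-((tn : ℂ) + (s k : ℂ))) • L)
        (N (exp (((tn : ℂ) + (s k : ℂ)) • L) Vn)))
    (Un U1 : E)
    (hUn : Un = exp ((tn : ℂ) • L) Vn)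
    (hU1 : U1 = exp ((tn1 : ℂ) • L) V1) :
    U1 = exp ((Δt : ℂ) • L) Un +
      Δt • exp ((Δt : ℂ) • L)
        (∑ k : I, w k • exp ((-(s k : ℂ)) • L)
          (N (exp ((s k : ℂ) • L) Un))) := by
  subst hV1 hUn hU1 htn1
  simp only [map_add, map_sum, ContinuousLinearMap.map_smul_of_tower,
    exp_smul_apply_exp_smul_apply]
  push_cast
  ring_nf
end

section
/- Let E be a complex Banach space, L : E →L[ℂ] E, N : E → E, and let a finite index set I with weights w : I → ℝ and phase shifts s : I → ℝ be given. Fix tⁿ ∈ ℝ and Δt ∈ ℝ, and set t^{n+1} = tⁿ + Δt and t^{n+1/2} = tⁿ + Δt/2. Suppose Vⁿ, V₁, V₂ ∈ E satisfy V₂ = (3/4) • Vⁿ + (1/4) • (V₁ + Δt • ∑_{k ∈ I} w k • exp(-(t^{n+1} + s k) • L)(N(exp((t^{n+1} + s k) • L)(V₁)))). Define Ūⁿ = exp(tⁿ • L)(Vⁿ), Ū₁ = exp(t^{n+1} • L)(V₁), and Ū₂ = exp(t^{n+1/2} • L)(V₂). Then Ū₂ = (3/4) • exp((Δt/2) • L)(Ūⁿ)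 + (1/4) • exp(-(Δt/2) • L)(Ū₁ + Δt • ∑_{k ∈ I} w k • exp(-(s k) • L)(N(exp((s k) • L)(Ū₁)))). -/
open NormedSpace

theorem NormedSpace.exp_smul_mul_exp_smul {𝕂 𝔸 : Type*} [RCLike 𝕂] [NormedRing 𝔸]
    [NormedAlgebra 𝕂 𝔸] [CompleteSpace 𝔸] (a b : 𝕂) (x : 𝔸) :
    exp (a • x) * exp (b • x) = exp ((a + b) • x) := by
  let +nondep : NormedAlgebra ℚ 𝔸 := .restrictScalars ℚ 𝕂 𝔸
  rw [add_smul, exp_add_of_commute (((Commute.refl x).smul_left a).smul_right b)]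

theorem NormedSpace.exp_smul_apply_exp_smul {𝕂 E : Type*} [RCLike 𝕂] [NormedAddCommGroup E]
    [NormedSpace 𝕂 E] [CompleteSpace E] (L : E →L[𝕂] E) (a b : 𝕂) (x : E) :
    exp (a • L) (exp (b • L) x) = exp ((a + b) • L) x :=
  DFunLike.congr_fun (exp_smul_mul_exp_smul a b L) x

/-- Equivalence of the second SSPRK stage in transformed variables `V̄` (eq. (22))
and in original variables `Ū` (eq. (23)). -/
theorem ssprk_stage2_equiv
    {E : Type*} [NormedAddCommGroup E] [NormedSpace ℂ E] [CompleteSpace E]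
    (L : E →L[ℂ] E) (N : E → E)
    {I : Type*} [Fintype I] (w : I → ℝ) (s : I → ℝ)
    (tn Δt : ℝ) (tn1 tnhalf : ℝ)
    (htn1 : tn1 = tn + Δt) (htnhalf : tnhalf = tn + Δt / 2)
    (Vn V1 V2 : E)
    (hV2 : V2 = (3 / 4 : ℝ) • Vn + (1 / 4 : ℝ) •
      (V1 + Δt • ∑ k : I, w k •
        exp ((-((tn1 : ℂ) + (s k : ℂ))) • L)
          (N (exp (((tn1 : ℂ) + (s k : ℂ)) • L) V1))))
    (Un U1 U2 : E)
    (hUn : Un = exp ((tn : ℂ) • L) Vn)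
    (hU1 : U1 = exp ((tn1 : ℂ) • L) V1)
    (hU2 : U2 = exp ((tnhalf : ℂ) • L) V2) :
    U2 = (3 / 4 : ℝ) • exp (((Δt / 2 : ℝ) : ℂ) • L) Un +
      (1 / 4 : ℝ) • exp ((-((Δt / 2 : ℝ) : ℂ)) • L)
        (U1 + Δt • ∑ k : I, w k • exp ((-(s k : ℂ)) • L)
          (N (exp ((s k : ℂ) • L) U1))) := by
  have h_n : ((Δt / 2 : ℝ) : ℂ) + tn = tnhalf := by push_cast [htnhalf]; ring
  have h_1 : -((Δt / 2 : ℝ) : ℂ) + tn1 = tnhalf := by push_cast [htn1, htnhalf]; ring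
  have h_N (k : I) : -((Δt / 2 : ℝ) : ℂ) + -(s k : ℂ) = tnhalf + -(tn1 + s k) := by
    push_cast [htn1, htnhalf]; ring
  subst hV2 hUn hU1 hU2
  simp only [map_add, ContinuousLinearMap.map_smul_of_tower, map_sum, exp_smul_apply_exp_smul,
    h_n, h_1, h_N, add_comm (s _ : ℂ)]
end
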